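/- If P is a probability distribution on a finite product space and Q is any probability distribution that factorizes as a product over subsets of the variables and has the same marginals as P on each of those subsets, then the cross entropy −Σ_x P(x) log₂ Q(x) equals the entropy S[Q]. Consequently D_KL[P‖Q] = S[Q] − S[P]. -/

import Mathlib

/-!
Since `Q = ∏ₖ fₖ`, the function `log₂ Q` is a sum of functions `log₂ fₖ`, each depending only on
the coordinates in `Aₖ`. The expectation of such a function is determined by the marginal on
`Aₖ`, which is the same under `P` and `Q`; hence `E_P[log₂ Q] = E_Q[log₂ Q]`.
-/

open Finset

/-- Shannon entropy (base 2). -/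
noncomputable def H {α : Type*} [Fintype α] (p : α → ℝ) : ℝ :=
  -∑ x, p x * Real.logb 2 (p x)

/-- Kullback–Leibler divergence (base 2). -/
noncomputable def KL {α : Type*} [Fintype α] (p q : α → ℝ) : ℝ :=
  ∑ x, p x * Real.logb 2 (p x / q x)

/-- Marginal of `P` on the set of coordinates `A`, as a function of a full
configuration (only its `A`-coordinates matter). -/
noncomputable def margA {M : ℕ} {X : Fin M → Type*} [∀ i, Fintype (X i)]
    [∀ i, DecidableEq (X i)] (P : (∀ i, X i) → ℝ) (A : Finset (Fin M))
    (z : ∀ i, X i) : ℝ :=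
  ∑ y, if (∀ i ∈ A, y i = z i) then P y else 0

noncomputable def crossEntropy {α : Type*} [Fintype α] (p q : α → ℝ) : ℝ :=
  -∑ x, p x * Real.logb 2 (q x)

lemma KL_eq_crossEntropy_sub_H {α : Type*} [Fintype α] {p q : α → ℝ}
    (hpq : ∀ x, p x ≠ 0 → q x ≠ 0) : KL p q = crossEntropy p q - H p := by
  rw [KL, crossEntropy, H, sub_neg_eq_add, neg_add_eq_sub, ← sum_sub_distrib]
  refine sum_congr rfl fun x _ => ?_
  by_cases hx : p x = 0
  · simp [hx]
  · rw [Real.logb_div hx (hpq x hx), mul_sub]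

lemma sum_mul_logb_eq_sum_sum_of_eq_prod {α ι : Type*} [Fintype α] [Fintype ι] {b : ℝ}
    {w q : α → ℝ} {f : ι → α → ℝ} (hq : ∀ x, q x = ∏ k, f k x)
    (hwq : ∀ x, w x ≠ 0 → q x ≠ 0) :
    ∑ x, w x * Real.logb b (q x) = ∑ k, ∑ x, w x * Real.logb b (f k x) := by
  rw [sum_comm]
  refine sum_congr rfl fun x _ => ?_
  by_cases hx : w x = 0
  · simp [hx]
  · have hf : ∀ k ∈ univ, f k x ≠ 0 := fun k _ =>
      prod_ne_zero_iff.1 (hq x ▸ hwq x hx) k (mem_univ k)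
    rw [hq, Real.logb_prod _ _ hf, mul_sum]

lemma sum_mul_eq_of_sum_fiber_eq {α β : Type*} [Fintype α] [Fintype β] [DecidableEq β]
    (π : α → β) {p q g : α → ℝ} (hg : ∀ x y, π x = π y → g x = g y)
    (hpq : ∀ z, ∑ y with π y = π z, p y = ∑ y with π y = π z, q y) :
    ∑ x, p x * g x = ∑ x, q x * g x := by
  have fiber (w : α → ℝ) (z : α) :
      ∑ y with π y = π z, w y * g y = (∑ y with π y = π z, w y) * g z := by
    rw [sum_mul]
    exact sum_congr rfl fun y hy => by rw [hg y z (mem_filter.1 hy).2]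
  rw [← sum_fiberwise univ π, ← sum_fiberwise univ π (fun x => q x * g x)]
  refine sum_congr rfl fun b _ => ?_
  rcases (univ.filter (π · = b)).eq_empty_or_nonempty with h | ⟨z, hz⟩
  · rw [h, sum_empty, sum_empty]
  · obtain rfl : π z = b := (mem_filter.1 hz).2
    rw [fiber p, fiber q, hpq]

section Marginal

variable {M : ℕ} {X : Fin M → Type*} [∀ i, Fintype (X i)] [∀ i, DecidableEq (X i)]

lemma margA_eq_sum_restrict_eq (R : (∀ i, X i) → ℝ) (A : Finset (Fin M)) (z : ∀ i, X i) :
    margA R A z = ∑ y with A.restrict y = A.restrict z, R y := by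
  rw [margA, sum_filter]
  refine sum_congr rfl fun y _ => if_congr ?_ rfl rfl
  simp [funext_iff]

lemma sum_mul_eq_of_margA_eq {P Q g : (∀ i, X i) → ℝ} {A : Finset (Fin M)}
    (hPQ : ∀ z, margA P A z = margA Q A z)
    (hg : ∀ x y, (∀ i ∈ A, x i = y i) → g x = g y) :
    ∑ x, P x * g x = ∑ x, Q x * g x := by
  refine sum_mul_eq_of_sum_fiber_eq A.restrict (fun x y hxy => hg x y fun i hi => ?_) fun z => ?_
  · exact congr_fun hxy ⟨i, hi⟩
  · rw [← margA_eq_sum_restrict_eq, ← margA_eq_sum_restrict_eq, hPQ]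

end Marginal

theorem stmt_3_general {M r : ℕ} {X : Fin M → Type*} [∀ i, Fintype (X i)]
    [∀ i, DecidableEq (X i)]
    (P Q : (∀ i, X i) → ℝ)
    (hP0 : ∀ x, 0 ≤ P x)
    (A : Fin r → Finset (Fin M)) (f : Fin r → (∀ i, X i) → ℝ)
    (hfloc : ∀ k x y, (∀ i ∈ A k, x i = y i) → f k x = f k y)
    (hQprod : ∀ x, Q x = ∏ k, f k x)
    (hac : ∀ x, 0 < P x → 0 < Q x)
    (hmarg : ∀ k z, margA Q (A k) z = margA P (A k) z) :
    (-∑ x, P x * Real.logb 2 (Q x)) = H Q ∧ KL P Q = H Q - H P := by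
  have hPQ : ∀ x, P x ≠ 0 → Q x ≠ 0 := fun x hx => (hac x ((hP0 x).lt_of_ne' hx)).ne'
  have cross : crossEntropy P Q = H Q := by
    calc crossEntropy P Q = -∑ k, ∑ x, P x * Real.logb 2 (f k x) := by
          rw [crossEntropy, sum_mul_logb_eq_sum_sum_of_eq_prod hQprod hPQ]
      _ = -∑ k, ∑ x, Q x * Real.logb 2 (f k x) := by
          congr! 2 with k
          exact sum_mul_eq_of_margA_eq (fun z => (hmarg k z).symm)
            fun x y hxy => by rw [hfloc k x y hxy]
      _ = H Q := by rw [H, sum_mul_logb_eq_sum_sum_of_eq_prod hQprod fun _ hx => hx]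
  exact ⟨cross, by rw [KL_eq_crossEntropy_sub_H hPQ, cross]⟩

/-- If `Q` factorizes over subsets `A_1,…,A_r` of the variables and has the same
marginals as `P` on each `A_k`, then the cross entropy `−Σ_x P(x) log₂ Q(x)`
equals `S[Q]`, whence `D_KL[P‖Q] = S[Q] − S[P]`. -/
theorem stmt_3 {M r : ℕ} {X : Fin M → Type*} [∀ i, Fintype (X i)]
    [∀ i, DecidableEq (X i)]
    (P Q : (∀ i, X i) → ℝ)
    (hP0 : ∀ x, 0 ≤ P x) (hP1 : ∑ x, P x = 1)
    (hQ0 : ∀ x, 0 ≤ Q x) (hQ1 : ∑ x, Q x = 1)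
    (A : Fin r → Finset (Fin M)) (f : Fin r → (∀ i, X i) → ℝ)
    (hf0 : ∀ k x, 0 ≤ f k x)
    (hfloc : ∀ k x y, (∀ i ∈ A k, x i = y i) → f k x = f k y)
    (hQprod : ∀ x, Q x = ∏ k, f k x)
    (hac : ∀ x, 0 < P x → 0 < Q x)
    (hmarg : ∀ k z, margA Q (A k) z = margA P (A k) z) :
    (-∑ x, P x * Real.logb 2 (Q x)) = H Q ∧ KL P Q = H Q - H P :=
  stmt_3_general P Q hP0 A f hfloc hQprod hac hmarg
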